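/- arXiv:1109.2561 — 5 statements merged into one kernel-verified Lean document; each statement's English description precedes it below -/
import Mathlib

section
/- Let (X,L) be a convex geometry with lattice of closed sets ℒ = (𝒞, ⊆). Then every copoint B of (X,L) is incomparable (under inclusion) with L({α(B)}) if and only if ℒ is 2-edge-connected, i.e., the Hasse diagram of ℒ viewed as an undirected graph has no cut edge. -/
structure ConvexGeom (α : Type*) [DecidableEq α] where
  X : Finset α
  sets : Finset (Finset α)
  subset_ground : ∀ A ∈ sets, A ⊆ X
  empty_mem : ∅ ∈ sets
  ground_mem : X ∈ sets
  inter_mem : ∀ A ∈ sets, ∀ B ∈ sets, A ∩ B ∈ sets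
  anti_exchange : ∀ C ∈ sets, ∀ p ∈ X, ∀ q ∈ X, p ∉ C → q ∉ C → p ≠ q →
    (∀ A ∈ sets, insert p C ⊆ A → q ∈ A) → ¬ (∀ A ∈ sets, insert q C ⊆ A → p ∈ A)

variable {α : Type*} [DecidableEq α]

def ConvexGeom.cl (G : ConvexGeom α) (S : Finset α) : Finset α :=
  G.X.filter (fun x => ∀ A ∈ G.sets, S ⊆ A → x ∈ A)

def ConvexGeom.IsCopoint (G : ConvexGeom α) (A : Finset α) : Prop :=
  A ∈ G.sets ∧ ∃! B, B ∈ G.sets ∧ (B \ A).card = 1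

def ConvexGeom.Attached (G : ConvexGeom α) (A : Finset α) (p : α) : Prop :=
  G.IsCopoint A ∧ ∃ B ∈ G.sets, B \ A = {p}

/-- A cycle of copoints `(A 0, …, A (l-1))` with attachment points `a i = α(A i)`:
the copoints are pairwise distinct and `α(A i) ∈ A (i+1)` cyclically. -/
def ConvexGeom.IsCycle (G : ConvexGeom α) {l : ℕ} (A : Fin l → Finset α) (a : Fin l → α) : Prop :=
  Function.Injective A ∧ (∀ i, G.Attached (A i) (a i)) ∧
  ∀ i : Fin l, a i ∈ A ⟨(i.1 + 1) % l, Nat.mod_lt _ i.pos⟩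

/-- A minimal cycle of copoints: no nonempty proper subfamily of its copoints can be
arranged into a cycle of copoints. -/
def ConvexGeom.IsMinCycle (G : ConvexGeom α) {l : ℕ} (A : Fin l → Finset α) (a : Fin l → α) :
    Prop :=
  G.IsCycle A a ∧ ∀ (m : ℕ) (B : Fin m → Finset α) (b : Fin m → α),
    0 < m → G.IsCycle B b → ¬ Set.range B ⊂ Set.range A

/-- The copoint graph `𝒢((X,L))`: vertices are the copoints, two distinct copoints `A`, `B`
are adjacent iff `α(A) ∈ B` and `α(B) ∈ A`. -/
def ConvexGeom.copointGraph (G : ConvexGeom α) : SimpleGraph {A : Finset α // G.IsCopoint A} where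
  Adj A B := A ≠ B ∧ (∃ p, G.Attached A.1 p ∧ p ∈ B.1) ∧ (∃ q, G.Attached B.1 q ∧ q ∈ A.1)
  symm := ⟨fun A B h => ⟨h.1.symm, h.2.2, h.2.1⟩⟩
  loopless := ⟨fun A h => h.1 rfl⟩

def ConvexGeom.CriticalPair (G : ConvexGeom α) (A B : Finset α) : Prop :=
  A ∈ G.sets ∧ B ∈ G.sets ∧ ¬ A ⊆ B ∧ ¬ B ⊆ A ∧
  (∀ U ∈ G.sets, B ⊂ U → A ⊂ U) ∧ (∀ D ∈ G.sets, D ⊂ A → D ⊂ B)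

/-- The graph `G^C_ℒ`: vertices are the critical pairs of the lattice of closed sets, and
two distinct critical pairs are adjacent iff they form a directed 2-cycle of the critical
digraph (where `(A,B) → (C,D)` iff `C ⊆ B`). -/
def ConvexGeom.critGraph (G : ConvexGeom α) :
    SimpleGraph {P : Finset α × Finset α // G.CriticalPair P.1 P.2} where
  Adj P Q := P ≠ Q ∧ Q.1.1 ⊆ P.1.2 ∧ P.1.1 ⊆ Q.1.2
  symm := ⟨fun P Q h => ⟨h.1.symm, h.2.2, h.2.1⟩⟩
  loopless := ⟨fun P h => h.1 rfl⟩

/-- The lattice of closed sets has a realizer of size `t`: `t` linear extensions of the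
inclusion order on closed sets whose intersection is the inclusion order. -/
def ConvexGeom.HasRealizer (G : ConvexGeom α) (t : ℕ) : Prop :=
  ∃ r : Fin t → ({A : Finset α // A ∈ G.sets} → {A : Finset α // A ∈ G.sets} → Prop),
    (∀ i, IsLinearOrder _ (r i)) ∧
    (∀ i A B, A.1 ⊆ B.1 → r i A B) ∧
    (∀ A B, (∀ i, r i A B) → A.1 ⊆ B.1)

/-- The order dimension of the lattice of closed sets: the least positive `t` admitting
a realizer of size `t`. -/
noncomputable def ConvexGeom.orderDim (G : ConvexGeom α) : ℕ :=
  sInf {t : ℕ | 0 < t ∧ G.HasRealizer t}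

/-- `S` is an independent set of the convex geometry: `p ∉ L(S \ {p})` for all `p ∈ S`. -/
def ConvexGeom.Indep (G : ConvexGeom α) (S : Finset α) : Prop :=
  S ⊆ G.X ∧ ∀ p ∈ S, p ∉ G.cl (S.erase p)


/-- The Hasse diagram of the lattice of closed sets, viewed as an undirected graph:
closed sets `A`, `B` are adjacent iff one covers the other in the inclusion order. -/
def ConvexGeom.hasse (G : ConvexGeom α) : SimpleGraph {A : Finset α // A ∈ G.sets} where
  Adj A B := (A.1 ⊂ B.1 ∧ ∀ C ∈ G.sets, ¬ (A.1 ⊂ C ∧ C ⊂ B.1)) ∨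
             (B.1 ⊂ A.1 ∧ ∀ C ∈ G.sets, ¬ (B.1 ⊂ C ∧ C ⊂ A.1))
  symm := ⟨fun A B h => h.symm⟩
  loopless := ⟨fun A h => by
    rcases h with ⟨h, -⟩ | ⟨h, -⟩ <;> exact lt_irrefl _ h⟩

/-! Covers in the lattice of closed sets are one-point extensions (by anti-exchange). If a copoint
`B` attached to `p` satisfies `B ⊆ L({p})`, then `p` enters or leaves along no edge of the Hasse
diagram other than `B ⋖ B ∪ {p}`, so this edge is a bridge; `L({p}) ⊆ B` is impossible since
`p ∉ B`. Conversely, for an edge `u ⋖ u ∪ {q}` there is a closed set `w` with `w ⊄ u` and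
`u ∪ {q} ⊄ w`: another closed set differing from `u` in one point if `u` is not a copoint, and
otherwise a closed set containing `q` but missing a point of `u \ L({q})`. Monotone chains
`u ← ∅ → w → X ← u ∪ {q}` then connect the endpoints without using the edge. -/

namespace SimpleGraph

variable {V : Type*} {G : SimpleGraph V}

theorem isBridge_of_forall_crossing_eq {u v : V} (S : Set V) (hu : u ∈ S) (hv : v ∉ S)
    (h : ∀ x y, G.Adj x y → x ∈ S → y ∉ S → s(x, y) = s(u, v)) : G.IsBridge s(u, v) := by
  rintro ⟨w⟩
  obtain ⟨d, -, hd, hd'⟩ := w.exists_boundary_dart S hu hv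
  have hadj := deleteEdges_adj.1 d.adj
  exact hadj.2 (h _ _ hadj.1 hd hd')

variable {P : Type*} [PartialOrder P] [IsStronglyAtomic P] [WellFoundedGT P]

theorem reachable_of_forall_covBy_adj {H : SimpleGraph P} {x y : P} (hxy : x ≤ y)
    (hH : ∀ c d, x ≤ c → d ≤ y → c ⋖ d → H.Adj c d) : H.Reachable x y := by
  induction x using WellFoundedGT.induction with
  | _ x ih =>
  rcases hxy.eq_or_lt with rfl | hlt
  · rfl
  obtain ⟨c, hxc, hcy⟩ := exists_covBy_le_of_lt hlt
  exact (hH x c le_rfl hcy hxc).reachable.trans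
    (ih c hxc.lt hcy fun d e hcd hey hde => hH d e (hxc.le.trans hcd) hey hde)

theorem reachable_hasse_of_le {x y : P} (hxy : x ≤ y) : (hasse P).Reachable x y :=
  reachable_of_forall_covBy_adj hxy fun _ _ _ _ hcd => Or.inl hcd

theorem reachable_hasse_deleteEdges_of_le {u v x y : P} (huv : u < v) (hxy : x ≤ y)
    (h : ¬ (x ≤ u ∧ v ≤ y)) : ((hasse P).deleteEdges {s(u, v)}).Reachable x y := by
  refine reachable_of_forall_covBy_adj hxy fun c d hxc hdy hcd =>
    deleteEdges_adj.2 ⟨Or.inl hcd, ?_⟩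
  rintro he
  rcases Sym2.eq_iff.1 he with ⟨rfl, rfl⟩ | ⟨rfl, rfl⟩
  · exact h ⟨hxc, hdy⟩
  · exact lt_asymm huv hcd.lt

/-- A covering edge `u ⋖ v` lies on the cycle `u ≥ m ≤ w ≤ M ≥ v`. -/
theorem not_isBridge_hasse_of_lt {u v w m M : P} (huv : u < v) (hwu : ¬ w ≤ u) (hvw : ¬ v ≤ w)
    (hmu : m ≤ u) (hmw : m ≤ w) (hwM : w ≤ M) (hvM : v ≤ M) :
    ¬ (hasse P).IsBridge s(u, v) := by
  have hvu : ¬ v ≤ u := huv.not_ge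
  rw [isBridge_iff, not_not]
  exact (reachable_hasse_deleteEdges_of_le huv hmu (hvu ·.2)).symm.trans <|
    (reachable_hasse_deleteEdges_of_le huv hmw (hvw ·.2)).trans <|
    (reachable_hasse_deleteEdges_of_le huv hwM (hwu ·.1)).trans
    (reachable_hasse_deleteEdges_of_le huv hvM (hvu ·.1)).symm

end SimpleGraph

open SimpleGraph

namespace ConvexGeom

variable {G : ConvexGeom α}

/-- A closed set `K` with `A ⊂ K ⊆ D` of least cardinality is `A` plus one point: two points
`x ≠ y` of `K \ A` would each lie in every closed set containing `A` and the other one. -/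
theorem exists_insert_mem_of_ssubset {A D : Finset α} (hA : A ∈ G.sets) (hD : D ∈ G.sets)
    (hAD : A ⊂ D) : ∃ x ∈ D, x ∉ A ∧ insert x A ∈ G.sets := by
  obtain ⟨K, hK, hKmin⟩ := Finset.exists_min_image
    (G.sets.filter fun K => A ⊂ K ∧ K ⊆ D) Finset.card ⟨D, by simp [hD, hAD]⟩
  simp only [Finset.mem_filter, and_imp] at hK hKmin
  obtain ⟨hKs, hAK, hKD⟩ := hK
  have hK_subset : ∀ E ∈ G.sets, ∀ z ∈ K, z ∉ A → insert z A ⊆ E → K ⊆ E := by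
    intro E hE z hzK hzA hzE
    have hAEK : A ⊂ E ∩ K := (Finset.ssubset_iff_of_subset
      (Finset.subset_inter ((Finset.subset_insert z A).trans hzE) hAK.1)).2
      ⟨z, Finset.mem_inter.2 ⟨hzE (Finset.mem_insert_self z A), hzK⟩, hzA⟩
    have hEK : E ∩ K = K := Finset.eq_of_subset_of_card_le Finset.inter_subset_right
      (hKmin _ (G.inter_mem _ hE _ hKs) hAEK (Finset.inter_subset_right.trans hKD))
    exact hEK ▸ Finset.inter_subset_left
  obtain ⟨x, hxK, hxA⟩ := Finset.exists_of_ssubset hAK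
  have hKx : insert x A = K := by
    refine (Finset.insert_subset hxK hAK.1).antisymm fun y hyK => ?_
    by_contra hy
    have hyA : y ∉ A := fun h => hy (Finset.mem_insert_of_mem h)
    have hX := G.subset_ground K hKs
    exact G.anti_exchange A hA x (hX hxK) y (hX hyK) hxA hyA
      (fun h => hy (h ▸ Finset.mem_insert_self x A))
      (fun E hE h => hK_subset E hE x hxK hxA h hyK) (fun E hE h => hK_subset E hE y hyK hyA h hxK)
  exact ⟨x, hKD hxK, hxA, hKx ▸ hKs⟩

theorem hasse_eq : G.hasse = SimpleGraph.hasse G.sets := by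
  ext u v
  simp [ConvexGeom.hasse, CovBy, ← Subtype.coe_lt_coe]

theorem covBy_iff {u v : G.sets} : u ⋖ v ↔ ∃ q ∉ u.1, v.1 = insert q u.1 := by
  constructor
  · intro huv
    obtain ⟨x, hxv, hxu, hins⟩ := exists_insert_mem_of_ssubset u.2 v.2 huv.lt
    refine ⟨x, hxu, by_contra fun hne => huv.2 (c := ⟨insert x u.1, hins⟩)
      (Finset.ssubset_insert hxu) ?_⟩
    exact Finset.ssubset_iff_subset_ne.2 ⟨Finset.insert_subset hxv huv.le, Ne.symm hne⟩
  · rintro ⟨q, hq, hv⟩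
    refine CovBy.of_image (OrderEmbedding.subtype _) ?_
    simpa [hv] using Finset.covBy_insert hq

namespace Attached

variable {B : Finset α} {p : α}

theorem notMem (h : G.Attached B p) : p ∉ B := by
  obtain ⟨-, B', -, hB'⟩ := h
  exact (Finset.mem_sdiff.1 (hB' ▸ Finset.mem_singleton_self p)).2

theorem mem_ground (h : G.Attached B p) : p ∈ G.X := by
  obtain ⟨-, B', hB's, hB'⟩ := h
  exact G.subset_ground B' hB's (Finset.mem_sdiff.1 (hB' ▸ Finset.mem_singleton_self p)).1

theorem eq_of_insert_mem (h : G.Attached B p) {x : α} (hx : x ∉ B)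
    (hxB : insert x B ∈ G.sets) : x = p := by
  obtain ⟨⟨-, huniq⟩, B', hB's, hB'⟩ := h
  have hxB' : insert x B = B' :=
    huniq.unique ⟨hxB, by simp [Finset.insert_sdiff_of_notMem _ hx]⟩ ⟨hB's, by simp [hB']⟩
  have hx' : x ∈ B' \ B := hxB' ▸ Finset.mem_sdiff.2 ⟨Finset.mem_insert_self x B, hx⟩
  rwa [hB', Finset.mem_singleton] at hx'

theorem mem_of_ssubset (h : G.Attached B p) {U : Finset α} (hU : U ∈ G.sets) (hBU : B ⊂ U) :
    p ∈ U := by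
  obtain ⟨x, hxU, hxB, hins⟩ := exists_insert_mem_of_ssubset h.1.1 hU hBU
  exact h.eq_of_insert_mem hxB hins ▸ hxU

theorem insert_mem (h : G.Attached B p) : insert p B ∈ G.sets := by
  have hBX : B ⊂ G.X := (Finset.ssubset_iff_of_subset (G.subset_ground B h.1.1)).2
    ⟨p, h.mem_ground, h.notMem⟩
  obtain ⟨x, -, hxB, hins⟩ := exists_insert_mem_of_ssubset h.1.1 G.ground_mem hBX
  exact h.eq_of_insert_mem hxB hins ▸ hins

theorem eq_of_covBy (h : G.Attached B p) (hBp : B ⊆ G.cl {p}) {x y : G.sets} (hxy : x ⋖ y)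
    (hx : p ∉ x.1) (hy : p ∈ y.1) : x.1 = B ∧ y.1 = insert p B := by
  obtain ⟨q, hqx, hyx⟩ := covBy_iff.1 hxy
  obtain rfl : p = q := by
    rw [hyx, Finset.mem_insert] at hy
    exact hy.resolve_right hx
  have hBy : B ⊆ y.1 := hBp.trans fun z hz =>
    (Finset.mem_filter.1 hz).2 y.1 y.2 (Finset.singleton_subset_iff.2 hy)
  have hBx : B ⊆ x.1 := fun z hz => by
    have hzy := hBy hz
    rw [hyx, Finset.mem_insert] at hzy
    exact hzy.resolve_left fun hzp => h.notMem (hzp ▸ hz)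
  have hxB : x.1 = B := by_contra fun hne =>
    hx (h.mem_of_ssubset x.2 (Finset.ssubset_iff_subset_ne.2 ⟨hBx, Ne.symm hne⟩))
  exact ⟨hxB, hxB ▸ hyx⟩

theorem isBridge_hasse (h : G.Attached B p) (hBp : B ⊆ G.cl {p}) :
    (SimpleGraph.hasse G.sets).IsBridge s(⟨B, h.1.1⟩, ⟨insert p B, h.insert_mem⟩) := by
  refine isBridge_of_forall_crossing_eq {x | p ∉ x.1} h.notMem (by simp) ?_
  rintro x y (hxy | hyx) hx hy <;> simp only [Set.mem_ofPred_eq, not_not] at hx hy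
  · obtain ⟨hxB, hyB⟩ := h.eq_of_covBy hBp hxy hx hy
    rw [show x = ⟨B, h.1.1⟩ from Subtype.ext hxB, show y = ⟨insert p B, h.insert_mem⟩ from
      Subtype.ext hyB]
  · exact absurd (hyx.le hy) hx

end Attached

theorem exists_not_le_of_covBy
    (H : ∀ (B : Finset α) (p : α), G.Attached B p → ¬ B ⊆ G.cl {p}) {u v : G.sets}
    (huv : u ⋖ v) : ∃ w : G.sets, ¬ w ≤ u ∧ ¬ v ≤ w := by
  obtain ⟨q, hqu, hv⟩ := covBy_iff.1 huv
  have hvu : v.1 \ u.1 = {q} := by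
    rw [hv, Finset.insert_sdiff_of_notMem _ hqu, Finset.sdiff_self]
    rfl
  by_cases hcop : G.IsCopoint u.1
  · obtain ⟨a, hau, hacl⟩ := Finset.not_subset.1 (H u.1 q ⟨hcop, v.1, v.2, hvu⟩)
    obtain ⟨F, hF, hqF, haF⟩ : ∃ F ∈ G.sets, {q} ⊆ F ∧ a ∉ F := by
      simpa [ConvexGeom.cl, G.subset_ground u.1 u.2 hau] using hacl
    exact ⟨⟨F, hF⟩, fun h => hqu (h (Finset.singleton_subset_iff.1 hqF)),
      fun h => haF (h (huv.le hau))⟩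
  · obtain ⟨B, hB, hBu, hBv⟩ : ∃ B ∈ G.sets, (B \ u.1).card = 1 ∧ B ≠ v.1 := by
      by_contra! hne
      exact hcop ⟨u.2, v.1, ⟨v.2, by simp [hvu]⟩, fun B hB => hne B hB.1 hB.2⟩
    obtain ⟨x, hx⟩ := Finset.card_eq_one.1 hBu
    refine ⟨⟨B, hB⟩, fun h => ?_, fun h => hBv ?_⟩
    · simp [Finset.sdiff_eq_empty_iff_subset.2 h] at hx
    · have hqB : q ∈ B \ u.1 :=
        Finset.mem_sdiff.2 ⟨h (hv ▸ Finset.mem_insert_self q u.1), hqu⟩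
      rw [hx, Finset.mem_singleton] at hqB
      subst hqB
      refine Finset.Subset.antisymm ?_ h
      rw [hv, Finset.insert_eq, Finset.union_comm, ← hx]
      exact le_sup_sdiff

theorem not_isBridge_hasse_of_covBy
    (H : ∀ (B : Finset α) (p : α), G.Attached B p → ¬ B ⊆ G.cl {p}) {u v : G.sets}
    (huv : u ⋖ v) : ¬ (SimpleGraph.hasse G.sets).IsBridge s(u, v) := by
  obtain ⟨w, hwu, hvw⟩ := exists_not_le_of_covBy H huv
  exact not_isBridge_hasse_of_lt (m := ⟨∅, G.empty_mem⟩) (M := ⟨G.X, G.ground_mem⟩)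
    huv.lt hwu hvw (Finset.empty_subset _) (Finset.empty_subset _) (G.subset_ground _ w.2)
    (G.subset_ground _ v.2)

theorem hasse_preconnected : (SimpleGraph.hasse G.sets).Preconnected := fun u v =>
  (reachable_hasse_of_le (x := ⟨∅, G.empty_mem⟩) (Finset.empty_subset u.1)).symm.trans
    (reachable_hasse_of_le (Finset.empty_subset v.1))

end ConvexGeom

/-- Every copoint `B` is incomparable with `L({α(B)})` iff the Hasse diagram
of the lattice of closed sets has no cut edge (i.e. the convex geometry is 2-edge-connected). -/
theorem copoints_incomparable_iff_twoEdgeConnected (G : ConvexGeom α) :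
    (∀ (B : Finset α) (p : α), G.Attached B p → ¬ B ⊆ G.cl {p} ∧ ¬ G.cl {p} ⊆ B) ↔
      ∀ e, ¬ G.hasse.IsBridge e := by
  rw [ConvexGeom.hasse_eq]
  constructor
  · intro H e he
    have H' B p (h : G.Attached B p) := (H B p h).1
    induction e using Sym2.ind with | _ u v => ?_
    rcases he.reachable_iff_adj.1 (ConvexGeom.hasse_preconnected u v) with huv | hvu
    · exact ConvexGeom.not_isBridge_hasse_of_covBy H' huv he
    · exact ConvexGeom.not_isBridge_hasse_of_covBy H' hvu (Sym2.eq_swap ▸ he)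
  · intro H B p h
    refine ⟨fun hBp => H _ (h.isBridge_hasse hBp), fun hpB => h.notMem (hpB ?_)⟩
    exact Finset.mem_filter.2 ⟨h.mem_ground, fun A _ hpA => Finset.singleton_subset_iff.1 hpA⟩
end

section
/- Every atomic convex geometry (X,L) with |X| > 1 is 2-edge-connected: the Hasse diagram of its lattice of closed sets, viewed as an undirected graph, has no cut edge. -/
variable {α : Type*} [DecidableEq α]

namespace ConvexGeom

variable (G : ConvexGeom α)

lemma mem_cl {S : Finset α} {x : α} :
    x ∈ G.cl S ↔ x ∈ G.X ∧ ∀ A ∈ G.sets, S ⊆ A → x ∈ A :=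
  Finset.mem_filter

lemma cl_subset {S A : Finset α} (hA : A ∈ G.sets) (hSA : S ⊆ A) : G.cl S ⊆ A :=
  fun _ hx => (G.mem_cl.1 hx).2 A hA hSA

lemma subset_cl {S : Finset α} (hS : S ⊆ G.X) : S ⊆ G.cl S :=
  fun _ hx => G.mem_cl.2 ⟨hS hx, fun _ _ hSA => hSA hx⟩

lemma cl_mem {S : Finset α} (hS : S ⊆ G.X) : G.cl S ∈ G.sets := by
  have hX : G.X ∈ G.sets.filter (S ⊆ ·) := Finset.mem_filter.2 ⟨G.ground_mem, hS⟩
  obtain ⟨M, hM, hmin⟩ := (G.sets.filter (S ⊆ ·)).exists_min_image Finset.card ⟨_, hX⟩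
  obtain ⟨hM, hSM⟩ := Finset.mem_filter.1 hM
  -- `M ∩ A` is again a closed superset of `S`, so minimality of `|M|` forces `M ⊆ A`.
  have hM_least : ∀ A ∈ G.sets, S ⊆ A → M ⊆ A := fun A hA hSA =>
    Finset.inter_eq_left.1 <| Finset.eq_of_subset_of_card_le Finset.inter_subset_left <|
      hmin _ <| Finset.mem_filter.2 ⟨G.inter_mem _ hM _ hA, Finset.subset_inter hSM hSA⟩
  have hclM : G.cl S = M := (G.cl_subset hM hSM).antisymm fun _ hx =>
    G.mem_cl.2 ⟨G.subset_ground M hM hx, fun A hA hSA => hM_least A hA hSA hx⟩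
  exact hclM ▸ hM

lemma singleton_mem_of_cl_eq {p : α} (hp : p ∈ G.X) (hcl : G.cl {p} = {p}) :
    ({p} : Finset α) ∈ G.sets :=
  hcl ▸ G.cl_mem (Finset.singleton_subset_iff.2 hp)

lemma notMem_cl_insert_of_mem_cl_insert {A : Finset α} (hA : A ∈ G.sets) {x y : α}
    (hx : x ∈ G.X) (hxA : x ∉ A) (hyA : y ∉ A) (hxy : x ≠ y)
    (hy : y ∈ G.cl (insert x A)) : x ∉ G.cl (insert y A) := fun hx' =>
  G.anti_exchange A hA x hx y (G.mem_cl.1 hy).1 hxA hyA hxy (G.mem_cl.1 hy).2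
    (G.mem_cl.1 hx').2

/-- Among the points of `B \ A` choose `x` with `L(A ∪ {x})` smallest; by anti-exchange any
`y ∈ L(A ∪ {x}) \ (A ∪ {x})` would have a strictly smaller closure `L(A ∪ {y})`. -/
lemma exists_insert_mem {A B : Finset α} (hA : A ∈ G.sets) (hB : B ∈ G.sets) (hAB : A ⊂ B) :
    ∃ x ∈ B \ A, insert x A ∈ G.sets := by
  obtain ⟨x, hx, hmin⟩ :=
    (B \ A).exists_min_image (fun z => (G.cl (insert z A)).card) (Finset.sdiff_nonempty.2 hAB.2)
  obtain ⟨hxB, hxA⟩ := Finset.mem_sdiff.1 hx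
  have hAX := G.subset_ground A hA
  have hxX := G.subset_ground B hB hxB
  have hins : insert x A ⊆ G.X := Finset.insert_subset hxX hAX
  refine ⟨x, hx, ?_⟩
  suffices G.cl (insert x A) ⊆ insert x A from
    (this.antisymm (G.subset_cl hins)) ▸ G.cl_mem hins
  intro y hy
  by_contra hyxA
  have hyA : y ∉ A := fun h => hyxA (Finset.mem_insert_of_mem h)
  have hxy : x ≠ y := fun h => hyxA (h ▸ Finset.mem_insert_self x A)
  have hyB : y ∈ B := G.cl_subset hB (Finset.insert_subset hxB hAB.1) hy
  have hyins : insert y A ⊆ G.X := Finset.insert_subset (G.mem_cl.1 hy).1 hAX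
  have hsub : G.cl (insert y A) ⊂ G.cl (insert x A) := by
    refine ⟨G.cl_subset (G.cl_mem hins) (Finset.insert_subset hy ?_), fun h => ?_⟩
    · exact (Finset.subset_insert x A).trans (G.subset_cl hins)
    · exact G.notMem_cl_insert_of_mem_cl_insert hA hxX hxA hyA hxy hy
        (h (G.subset_cl hins (Finset.mem_insert_self x A)))
  exact (Finset.card_lt_card hsub).not_ge (hmin y (Finset.mem_sdiff.2 ⟨hyB, hyA⟩))

lemma exists_erase_mem {A B : Finset α} (hA : A ∈ G.sets) (hB : B ∈ G.sets) (hAB : A ⊂ B) :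
    ∃ y ∈ B \ A, B.erase y ∈ G.sets := by
  obtain ⟨x, hx, hxA⟩ := G.exists_insert_mem hA hB hAB
  obtain ⟨hxB, hxA'⟩ := Finset.mem_sdiff.1 hx
  rcases (Finset.insert_subset hxB hAB.1).eq_or_ssubset with h | h
  · exact ⟨x, hx, by rwa [← h, Finset.erase_insert hxA']⟩
  · obtain ⟨y, hy, hyB⟩ := exists_erase_mem hxA hB h
    exact ⟨y, Finset.sdiff_subset_sdiff le_rfl (Finset.subset_insert x A) hy, hyB⟩
termination_by B.card - A.card
decreasing_by
  have := Finset.card_lt_card h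
  rw [Finset.card_insert_of_notMem hxA'] at this ⊢
  have := Finset.card_le_card hAB.1
  omega

lemma exists_eq_insert_of_covers {A B : Finset α} (hA : A ∈ G.sets) (hB : B ∈ G.sets)
    (hAB : A ⊂ B) (hcov : ∀ C ∈ G.sets, ¬ (A ⊂ C ∧ C ⊂ B)) : ∃ x ∉ A, B = insert x A := by
  obtain ⟨x, hx, hxA⟩ := G.exists_insert_mem hA hB hAB
  obtain ⟨hxB, hxA'⟩ := Finset.mem_sdiff.1 hx
  refine ⟨x, hxA', (Finset.insert_subset hxB hAB.1).eq_or_ssubset.elim Eq.symm fun h => ?_⟩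
  exact (hcov _ hxA ⟨Finset.ssubset_insert hxA', h⟩).elim

lemma hasse_adj_of_card_eq {a b : {A : Finset α // A ∈ G.sets}} (hab : a.1 ⊆ b.1)
    (hcard : b.1.card = a.1.card + 1) : G.hasse.Adj a b := by
  refine Or.inl ⟨hab.ssubset_of_ne fun h => ?_, fun C _ ⟨haC, hCb⟩ => ?_⟩
  · rw [h] at hcard
    omega
  · have := Finset.card_lt_card haC
    have := Finset.card_lt_card hCb
    omega

lemma hasse_deleteEdges_adj {v w a b : {A : Finset α // A ∈ G.sets}} (hvw : v.1 ⊂ w.1)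
    (hab : a.1 ⊆ b.1) (hcard : b.1.card = a.1.card + 1) (hne : a ≠ v ∨ b ≠ w) :
    (G.hasse.deleteEdges {s(v, w)}).Adj a b := by
  refine SimpleGraph.deleteEdges_adj.2 ⟨G.hasse_adj_of_card_eq hab hcard, ?_⟩
  rw [Set.mem_singleton_iff, Sym2.eq_iff]
  rintro (⟨rfl, rfl⟩ | ⟨rfl, rfl⟩)
  · simp at hne
  · exact hvw.2 hab

lemma reachable_of_subset {H : SimpleGraph {A : Finset α // A ∈ G.sets}}
    (hH : ∀ a b : {A : Finset α // A ∈ G.sets}, a.1.Nonempty → a.1 ⊆ b.1 →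
      b.1.card = a.1.card + 1 → H.Adj a b)
    {U V : {A : Finset α // A ∈ G.sets}} (hU : U.1.Nonempty) (hUV : U.1 ⊆ V.1) :
    H.Reachable U V := by
  rcases hUV.eq_or_ssubset with h | h
  · exact Subtype.ext h ▸ .refl U
  obtain ⟨x, hx, hxU⟩ := G.exists_insert_mem U.2 V.2 h
  obtain ⟨hxV, hxU'⟩ := Finset.mem_sdiff.1 hx
  have hstep : H.Adj U ⟨insert x U.1, hxU⟩ :=
    hH _ _ hU (Finset.subset_insert x U.1) (Finset.card_insert_of_notMem hxU')
  exact hstep.reachable.trans <|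
    reachable_of_subset hH (Finset.insert_nonempty x U.1) (Finset.insert_subset hxV hUV)
termination_by V.1.card - U.1.card
decreasing_by
  have := Finset.card_le_card (Finset.insert_subset hxV hUV)
  rw [Finset.card_insert_of_notMem hxU'] at this ⊢
  omega

/-- The edge `∅ — {x}` is bypassed through a second atom `{q}`: both atoms reach `X` along
chains of nonempty closed sets. -/
lemma hasse_deleteEdges_reachable_of_empty (hatomic : ∀ p ∈ G.X, G.cl {p} = {p})
    (hcard : 1 < G.X.card) {v w : {A : Finset α // A ∈ G.sets}} (hv : v.1 = ∅) {x : α}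
    (hw : w.1 = {x}) : (G.hasse.deleteEdges {s(v, w)}).Reachable v w := by
  have hvw : v.1 ⊂ w.1 := by
    rw [hv, hw]
    exact Finset.empty_ssubset.2 (Finset.singleton_nonempty x)
  obtain ⟨q, hq, hqx⟩ := Finset.exists_mem_ne hcard x
  let Q : {A : Finset α // A ∈ G.sets} := ⟨{q}, G.singleton_mem_of_cl_eq hq (hatomic q hq)⟩
  let T : {A : Finset α // A ∈ G.sets} := ⟨G.X, G.ground_mem⟩
  have hchain : ∀ a b : {A : Finset α // A ∈ G.sets}, a.1.Nonempty → a.1 ⊆ b.1 →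
      b.1.card = a.1.card + 1 → (G.hasse.deleteEdges {s(v, w)}).Adj a b :=
    fun a b ha hab hcard => G.hasse_deleteEdges_adj hvw hab hcard
      (Or.inl fun h => by simp [h, hv] at ha)
  have hvQ : (G.hasse.deleteEdges {s(v, w)}).Adj v Q :=
    G.hasse_deleteEdges_adj hvw (by simp [hv]) (by simp [hv, Q])
      (Or.inr fun h => hqx (by simpa [Q, hw] using congrArg Subtype.val h))
  have hQT := G.reachable_of_subset hchain (U := Q) (V := T) (Finset.singleton_nonempty q)
    (Finset.singleton_subset_iff.2 hq)
  have hwT := G.reachable_of_subset hchain (V := T) (by simp [hw]) (G.subset_ground _ w.2)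
  exact hvQ.reachable.trans (hQT.trans hwT.symm)

/-- Since `w` is not an atom it has an extreme point `y ≠ x`, and the edge `v ⋖ w` is bypassed
by `v ⋗ v \ {y} ⋖ w \ {y} ⋖ w`. -/
lemma hasse_deleteEdges_reachable_of_nonempty (hatomic : ∀ p ∈ G.X, G.cl {p} = {p})
    {v w : {A : Finset α // A ∈ G.sets}} (hv : v.1.Nonempty) {x : α} (hxv : x ∉ v.1)
    (hw : w.1 = insert x v.1) : (G.hasse.deleteEdges {s(v, w)}).Reachable v w := by
  have hvw : v.1 ⊂ w.1 := hw ▸ Finset.ssubset_insert hxv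
  have hxw : x ∈ w.1 := hw ▸ Finset.mem_insert_self x v.1
  have hx : x ∈ G.X := G.subset_ground _ w.2 hxw
  have hxw' : {x} ⊂ w.1 := by
    obtain ⟨z, hz⟩ := hv
    refine (Finset.ssubset_iff_of_subset (Finset.singleton_subset_iff.2 hxw)).2
      ⟨z, hvw.1 hz, fun h => hxv (Finset.mem_singleton.1 h ▸ hz)⟩
  obtain ⟨y, hy, hwy⟩ :=
    G.exists_erase_mem (G.singleton_mem_of_cl_eq hx (hatomic x hx)) w.2 hxw'
  obtain ⟨hyw, hyx⟩ := Finset.mem_sdiff.1 hy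
  have hyv : y ∈ v.1 := by
    rw [hw] at hyw
    exact (Finset.mem_insert.1 hyw).resolve_left fun h => hyx (Finset.mem_singleton.2 h)
  have hvy : v.1.erase y ∈ G.sets := by
    have := G.inter_mem _ v.2 _ hwy
    rwa [Finset.inter_erase, Finset.inter_eq_left.2 hvw.1] at this
  let C : {A : Finset α // A ∈ G.sets} := ⟨v.1.erase y, hvy⟩
  let D : {A : Finset α // A ∈ G.sets} := ⟨w.1.erase y, hwy⟩
  have hCv : C ≠ v := fun h => Finset.notMem_erase y v.1 <| by
    rw [show v.1.erase y = v.1 from congrArg Subtype.val h]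
    exact hyv
  have hDv : D ≠ v := fun h => hxv <| by
    rw [← show w.1.erase y = v.1 from congrArg Subtype.val h]
    exact Finset.mem_erase.2 ⟨fun h => hyx (Finset.mem_singleton.2 h.symm), hxw⟩
  have hcardv := Finset.card_erase_of_mem hyv
  have hcardw := Finset.card_erase_of_mem hyw
  have hcard : w.1.card = v.1.card + 1 := by rw [hw, Finset.card_insert_of_notMem hxv]
  have hpos : 0 < v.1.card := Finset.card_pos.2 hv
  have hvC := G.hasse_deleteEdges_adj hvw (a := C) (b := v) (Finset.erase_subset y v.1)
    (by simp only [C]; omega) (Or.inl hCv)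
  have hCD := G.hasse_deleteEdges_adj hvw (a := C) (b := D)
    (Finset.erase_subset_erase y hvw.1) (by simp only [C, D]; omega) (Or.inl hCv)
  have hDw := G.hasse_deleteEdges_adj hvw (a := D) (b := w) (Finset.erase_subset y w.1)
    (by simp only [D]; omega) (Or.inl hDv)
  exact hvC.symm.reachable.trans (hCD.reachable.trans hDw.reachable)

lemma hasse_deleteEdges_reachable_of_covers (hatomic : ∀ p ∈ G.X, G.cl {p} = {p})
    (hcard : 1 < G.X.card) {v w : {A : Finset α // A ∈ G.sets}} (hvw : v.1 ⊂ w.1)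
    (hcov : ∀ C ∈ G.sets, ¬ (v.1 ⊂ C ∧ C ⊂ w.1)) :
    (G.hasse.deleteEdges {s(v, w)}).Reachable v w := by
  obtain ⟨x, hxv, hw⟩ := G.exists_eq_insert_of_covers v.2 w.2 hvw hcov
  rcases v.1.eq_empty_or_nonempty with hv | hv
  · exact G.hasse_deleteEdges_reachable_of_empty hatomic hcard hv (by rw [hw, hv]; rfl)
  · exact G.hasse_deleteEdges_reachable_of_nonempty hatomic hv hxv hw

end ConvexGeom

/-- Every atomic convex geometry with more than one point is
2-edge-connected: the Hasse diagram of its lattice of closed sets has no cut edge. -/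
theorem atomic_twoEdgeConnected (G : ConvexGeom α)
    (hatomic : ∀ p ∈ G.X, G.cl {p} = {p}) (hcard : 1 < G.X.card) :
    ∀ e, ¬ (e ∈ G.hasse.edgeSet ∧ G.hasse.IsBridge e) := by
  rintro ⟨v, w⟩ ⟨hadj, hbridge⟩
  rw [SimpleGraph.mem_edgeSet] at hadj
  rw [SimpleGraph.isBridge_iff] at hbridge
  rcases hadj with ⟨hvw, hcov⟩ | ⟨hwv, hcov⟩
  · exact hbridge (G.hasse_deleteEdges_reachable_of_covers hatomic hcard hvw hcov)
  · rw [Sym2.eq_swap] at hbridge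
    exact hbridge (G.hasse_deleteEdges_reachable_of_covers hatomic hcard hwv hcov).symm
end

section
/- Let (X,L) be a convex geometry and let (A_1, …, A_l) be a minimal cycle of copoints of length l > 2. Then the attachment points are pairwise distinct: α(A_i) ≠ α(A_j) whenever i ≠ j. -/
variable {α : Type*} [DecidableEq α]

open Function

theorem Function.Injective.range_comp_castLE_ssubset {β : Type*} {m n : ℕ} {f : Fin n → β}
    (hf : Injective f) (hmn : m < n) :
    Set.range (fun k : Fin m => f (Fin.castLE hmn.le k)) ⊂ Set.range f := by
  refine ⟨Set.range_comp_subset_range _ f, fun hsub => ?_⟩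
  obtain ⟨k, hk⟩ := hsub ⟨⟨m, hmn⟩, rfl⟩
  have := congrArg Fin.val (hf hk)
  simp only [Fin.val_castLE] at this
  omega

namespace ConvexGeom

variable {G : ConvexGeom α} {n : ℕ} {A : Fin (n + 1) → Finset α} {a : Fin (n + 1) → α}

theorem isCycle_iff : G.IsCycle A a ↔
    Injective A ∧ (∀ i, G.Attached (A i) (a i)) ∧ ∀ i, a i ∈ A (i + 1) := by
  have succ_eq : ∀ i : Fin (n + 1),
      (⟨(i.1 + 1) % (n + 1), Nat.mod_lt _ i.pos⟩ : Fin (n + 1)) = i + 1 := fun i =>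
    Fin.ext (by simp [Fin.val_add])
  simp only [IsCycle, succ_eq]

theorem IsCycle.rotate (h : G.IsCycle A a) (r : Fin (n + 1)) :
    G.IsCycle (fun k => A (k + r)) (fun k => a (k + r)) := by
  obtain ⟨hinj, hatt, hsucc⟩ := isCycle_iff.1 h
  refine isCycle_iff.2 ⟨hinj.comp (add_left_injective r), fun k => hatt _, fun k => ?_⟩
  simpa only [add_right_comm k r 1] using hsucc (k + r)

theorem IsCycle.truncate (h : G.IsCycle A a) (t : Fin (n + 1)) (hclose : a t ∈ A 0) :
    G.IsCycle (fun k : Fin (t + 1) => A (Fin.castLE t.isLt k))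
      (fun k => a (Fin.castLE t.isLt k)) := by
  obtain ⟨hinj, hatt, hsucc⟩ := isCycle_iff.1 h
  refine isCycle_iff.2 ⟨hinj.comp (Fin.castLE_injective _), fun k => hatt _, fun k => ?_⟩
  rcases Fin.eq_castSucc_or_eq_last k with ⟨k, rfl⟩ | rfl
  · have castLE_succ : Fin.castLE t.isLt k.succ = Fin.castLE t.isLt k.castSucc + 1 := by
      ext
      rw [Fin.val_add_one_of_lt (by simp [Fin.lt_def]; omega)]
      simp
    rw [Fin.coeSucc_eq_succ, castLE_succ]
    exact hsucc _
  · rw [Fin.last_add_one]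
    exact hclose

end ConvexGeom

theorem minCycle_attach_injective_general (G : ConvexGeom α) {l : ℕ}
    (A : Fin l → Finset α) (a : Fin l → α) (h : G.IsMinCycle A a) :
    ∀ i j : Fin l, i ≠ j → a i ≠ a j := by
  intro i j hij haij
  obtain ⟨n, rfl⟩ := Nat.exists_eq_add_one_of_ne_zero i.pos.ne'
  obtain ⟨hcyc, hmin⟩ := h
  have hrot := hcyc.rotate (j + 1)
  set t := i - (j + 1) with ht
  have ht_lt : t.val < n := by
    refine Fin.lt_last_iff_ne_last.2 fun hlast => hij ?_
    rw [← sub_add_cancel i (j + 1), ← ht, hlast, add_left_comm, Fin.last_add_one, add_zero]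
  have hclose : a (t + (j + 1)) ∈ A (0 + (j + 1)) := by
    simpa only [ht, sub_add_cancel, zero_add, haij] using (ConvexGeom.isCycle_iff.1 hcyc).2.2 j
  refine hmin (t + 1) _ _ t.val.succ_pos (hrot.truncate t hclose) ?_
  calc _ ⊂ Set.range (fun k => A (k + (j + 1))) :=
        hrot.1.range_comp_castLE_ssubset (Nat.succ_lt_succ ht_lt)
    _ = Set.range A := (Equiv.addRight (j + 1)).surjective.range_comp A

/-- In a minimal cycle of copoints of length `l > 2`, the attachment points
are pairwise distinct. -/
theorem minCycle_attach_injective (G : ConvexGeom α) {l : ℕ} (hl : 2 < l)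
    (A : Fin l → Finset α) (a : Fin l → α) (h : G.IsMinCycle A a) :
    ∀ i j : Fin l, i ≠ j → a i ≠ a j :=
  minCycle_attach_injective_general G A a h
end

section
/- Let (X,L) be a convex geometry and let (A_1, …, A_l) be a minimal cycle of copoints of length l > 2. Then α(A_i) ∈ A_j holds only when j = i + 1, or when i = l and j = 1 (indices taken cyclically). -/
variable {α : Type*} [DecidableEq α]

/-!
A chord `α(A i) ∈ A j` with `j ≠ i + 1` closes the arc `A j, A (j + 1), …, A i` into a cycle of
copoints. That arc omits `A (i + 1)`, so it is a proper subfamily, contradicting minimality.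
-/

namespace Fin

variable {l : ℕ} [NeZero l]

theorem mk_add_one_mod (i : Fin l) : (⟨(i.1 + 1) % l, Nat.mod_lt _ i.pos⟩ : Fin l) = i + 1 := by
  ext
  rw [val_add, val_one', Nat.add_mod_mod]

theorem val_add_one_lt_of_add_one_ne_zero {d : Fin l} (hd : d + 1 ≠ 0) : d.1 + 1 < l := by
  refine lt_of_le_of_ne d.isLt fun h => hd (Fin.ext ?_)
  rw [val_add, val_one', Nat.add_mod_mod, h, Nat.mod_self, val_zero]

theorem add_castLE_ne_add_add_one (j d : Fin l) (hd : d.1 + 1 < l) (k : Fin (d + 1)) :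
    j + castLE d.isLt k ≠ j + d + 1 := by
  rw [add_assoc, Ne, add_right_inj, Fin.ext_iff, val_castLE, val_add_one_of_lt' hd]
  exact k.isLt.ne

end Fin

namespace ConvexGeom

variable {G : ConvexGeom α} {l : ℕ} {A : Fin l → Finset α} {a : Fin l → α}

theorem IsCycle.mem_add_one [NeZero l] (h : G.IsCycle A a) (i : Fin l) : a i ∈ A (i + 1) :=
  Fin.mk_add_one_mod i ▸ h.2.2 i

theorem IsCycle.arc [NeZero l] (h : G.IsCycle A a) (j d : Fin l) (hchord : a (j + d) ∈ A j) :
    G.IsCycle (fun k : Fin (d + 1) => A (j + Fin.castLE d.isLt k))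
      (fun k => a (j + Fin.castLE d.isLt k)) := by
  refine ⟨h.1.comp ((add_right_injective j).comp (Fin.castLE_injective _)), fun k => h.2.1 _,
    fun k => ?_⟩
  rcases Nat.lt_succ_iff_lt_or_eq.mp k.isLt with hk | hk
  · have hnext : Fin.castLE d.isLt ⟨(k.1 + 1) % (d.1 + 1), Nat.mod_lt _ k.pos⟩ =
        Fin.castLE d.isLt k + 1 := by
      ext
      rw [Fin.val_castLE, Fin.val_add_one_of_lt' (by rw [Fin.val_castLE]; omega), Fin.val_castLE]
      exact Nat.mod_eq_of_lt (by omega)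
    simpa only [hnext, add_assoc] using h.mem_add_one (j + Fin.castLE d.isLt k)
  · have hlast : Fin.castLE d.isLt k = d := Fin.ext hk
    have hfirst : Fin.castLE d.isLt ⟨(k.1 + 1) % (d.1 + 1), Nat.mod_lt _ k.pos⟩ = 0 := by
      ext
      simp [hk]
    simpa only [hlast, hfirst, add_zero] using hchord

end ConvexGeom

theorem minCycle_attach_mem_only_succ_general (G : ConvexGeom α) {l : ℕ}
    (A : Fin l → Finset α) (a : Fin l → α) (h : G.IsMinCycle A a) :
    ∀ i j : Fin l, a i ∈ A j → j = ⟨(i.1 + 1) % l, Nat.mod_lt _ i.pos⟩ := by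
  intro i j hij
  have := i.neZero
  rw [Fin.mk_add_one_mod]
  by_contra hj
  set d := i - j
  have hjd : j + d = i := add_sub_cancel j i
  have hd : d.1 + 1 < l := Fin.val_add_one_lt_of_add_one_ne_zero fun hd0 =>
    hj (by rw [← hjd, add_assoc, hd0, add_zero])
  refine h.2 _ _ _ d.1.succ_pos (h.1.arc j d (hjd ▸ hij))
    ⟨Set.range_comp_subset_range (fun k => j + Fin.castLE d.isLt k) A, fun hsub => ?_⟩
  obtain ⟨k, hk⟩ := hsub ⟨i + 1, rfl⟩
  exact Fin.add_castLE_ne_add_add_one j d hd k (hjd ▸ h.1.1 hk)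

/-- In a minimal cycle of copoints of length `l > 2`, `α(A i) ∈ A j` holds
only for `j = i + 1` (indices taken cyclically). -/
theorem minCycle_attach_mem_only_succ (G : ConvexGeom α) {l : ℕ} (hl : 2 < l)
    (A : Fin l → Finset α) (a : Fin l → α) (h : G.IsMinCycle A a) :
    ∀ i j : Fin l, a i ∈ A j → j = ⟨(i.1 + 1) % l, Nat.mod_lt _ i.pos⟩ :=
  minCycle_attach_mem_only_succ_general G A a h
end

section
/- For every positive integer k and every realization of the extended Erdős–Szekeres point set XES(k), the order dimension of the lattice of closed sets of the realizable convex geometry on XES(k) equals k + 1. -/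
/-- `A` is a closed set of the realizable convex geometry on the finite planar point set
`P`, whose closure operator is `L(A) = conv(A) ∩ P`: that is, `A ⊆ P` and
`conv(A) ∩ P ⊆ A`. -/
def RClosed (P A : Finset (ℝ × ℝ)) : Prop :=
  A ⊆ P ∧ ∀ x ∈ P, x ∈ convexHull ℝ (A : Set (ℝ × ℝ)) → x ∈ A

/-- `A` is a copoint of the realizable convex geometry on `P`: a closed set such that
there is exactly one closed set `B` with `|B \ A| = 1`. -/
def RCopoint (P A : Finset (ℝ × ℝ)) : Prop :=
  RClosed P A ∧ ∃! B, RClosed P B ∧ (B \ A).card = 1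

/-- The copoint `A` is attached to the point `p` (i.e. `p = α(A)`). -/
def RAttached (P A : Finset (ℝ × ℝ)) (p : ℝ × ℝ) : Prop :=
  RCopoint P A ∧ ∃ B, RClosed P B ∧ B \ A = {p}

/-- A cycle of copoints `(A 0, …, A (l-1))` with attachment points `a i = α(A i)`:
the copoints are pairwise distinct and `α(A i) ∈ A (i+1)` cyclically. -/
def RCycle (P : Finset (ℝ × ℝ)) {l : ℕ} (A : Fin l → Finset (ℝ × ℝ))
    (a : Fin l → ℝ × ℝ) : Prop :=
  Function.Injective A ∧ (∀ i, RAttached P (A i) (a i)) ∧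
  ∀ i : Fin l, a i ∈ A ⟨(i.1 + 1) % l, Nat.mod_lt _ i.pos⟩

/-- A minimal cycle of copoints: no nonempty proper subfamily of its copoints can be
arranged into a cycle of copoints. -/
def RMinCycle (P : Finset (ℝ × ℝ)) {l : ℕ} (A : Fin l → Finset (ℝ × ℝ))
    (a : Fin l → ℝ × ℝ) : Prop :=
  RCycle P A a ∧ ∀ (m : ℕ) (B : Fin m → Finset (ℝ × ℝ)) (b : Fin m → ℝ × ℝ),
    0 < m → RCycle P B b → ¬ Set.range B ⊂ Set.range A

/-- A planar point set is in general position if no three of its points are collinear. -/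
def GenPos (P : Finset (ℝ × ℝ)) : Prop :=
  ∀ a ∈ P, ∀ b ∈ P, ∀ c ∈ P, a ≠ b → a ≠ c → b ≠ c →
    ¬ Collinear ℝ ({a, b, c} : Set (ℝ × ℝ))

/-- Every line through two points of `S` has (finite) slope strictly smaller than the slope
of the line through `l` and `m` (pairs are ordered by first coordinate; the inequality is
stated in cross-multiplied form, valid since `l.1 < m.1` in a composition). -/
def SlopeLT (S : Finset (ℝ × ℝ)) (l m : ℝ × ℝ) : Prop :=
  ∀ a ∈ S, ∀ b ∈ S, a.1 < b.1 → (b.2 - a.2) * (m.1 - l.1) < (m.2 - l.2) * (b.1 - a.1)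

/-- `P` is a composition of `L` and `M` (where `M` is identified with its translate):
`P = L ∪ M`, every point of `M` has greater first coordinate than every point of `L`, all
lines through two points of `L` or through two points of `M` are non-vertical, and the
slope of any line from `L` to `M` exceeds the slope of any line within `L` or within `M`. -/
def CompOf (P L M : Finset (ℝ × ℝ)) : Prop :=
  P = L ∪ M ∧
  (∀ a ∈ L, ∀ b ∈ L, a ≠ b → a.1 ≠ b.1) ∧
  (∀ a ∈ M, ∀ b ∈ M, a ≠ b → a.1 ≠ b.1) ∧
  (∀ l ∈ L, ∀ m ∈ M, l.1 < m.1) ∧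
  (∀ l ∈ L, ∀ m ∈ M, SlopeLT L l m ∧ SlopeLT M l m)

/-- `P` is a composition of the point sets in the list `Ls`, via iterated binary
compositions whose leaves, read left to right, are the members of `Ls`. -/
inductive CompOfList : Finset (ℝ × ℝ) → List (Finset (ℝ × ℝ)) → Prop
  | single (L : Finset (ℝ × ℝ)) : CompOfList L [L]
  | comp {P Q R : Finset (ℝ × ℝ)} {ls ms : List (Finset (ℝ × ℝ))} :
      CompOfList Q ls → CompOfList R ms → CompOf P Q R → CompOfList P (ls ++ ms)

/-- `P` is (a realization of) the Erdős–Szekeres point set `ES(i, j)`: `ES(0, k)` and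
`ES(k, 0)` are singletons, and for `i, j ≥ 1`, `ES(i, j)` is a composition of
`ES(i-1, j)` and `ES(i, j-1)`. -/
inductive IsES : ℕ → ℕ → Finset (ℝ × ℝ) → Prop
  | base_left (k : ℕ) (p : ℝ × ℝ) : IsES 0 k {p}
  | base_right (k : ℕ) (p : ℝ × ℝ) : IsES k 0 {p}
  | step {i j : ℕ} {P Q R : Finset (ℝ × ℝ)} :
      IsES i (j + 1) Q → IsES (i + 1) j R → CompOf P Q R → IsES (i + 1) (j + 1) P

/-- `P` is (a realization of) the extended Erdős–Szekeres point set `XES(k)`: the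
composition, performed in order from left to right, of `ES(0,k), ES(1,k-1), …, ES(k,0)`. -/
def IsXES (k : ℕ) (P : Finset (ℝ × ℝ)) : Prop :=
  ∃ E Q : ℕ → Finset (ℝ × ℝ),
    (∀ i ≤ k, IsES i (k - i) (E i)) ∧
    Q 0 = E 0 ∧ (∀ i < k, CompOf (Q (i + 1)) (Q i) (E (i + 1))) ∧ P = Q k

/-- The lattice of closed sets of the realizable convex geometry on `P` has a realizer of
size `t`: `t` linear extensions of the inclusion order on closed sets whose intersection is
the inclusion order. -/
def RHasRealizer (P : Finset (ℝ × ℝ)) (t : ℕ) : Prop :=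
  ∃ r : Fin t → ({A : Finset (ℝ × ℝ) // RClosed P A} →
      {A : Finset (ℝ × ℝ) // RClosed P A} → Prop),
    (∀ i, IsLinearOrder _ (r i)) ∧
    (∀ i A B, A.1 ⊆ B.1 → r i A B) ∧
    (∀ A B, (∀ i, r i A B) → A.1 ⊆ B.1)

/-!
Upper bound: `XES(k)` carries `k + 1` linear orders of its points such that, for every point
`x` and every open half-plane `H` bounded by a line through `x`, some order lists all points of
`H` before `x`. They are built along the compositions: since the slopes between the two parts
of a composition exceed all slopes inside the parts, a line through a point of one part that
cuts off a point of the other part meets its own part only on one side of that point, so the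
two parts can be concatenated in a suitable order. A point outside a closed set `B` is
separated from `conv B` by such a half-plane, so comparing closed sets colexicographically
along these orders gives a realizer.

Lower bound: one point from each `ES(i, k - i)` gives a cup `p 0, …, p k`, each point of which
lies outside the convex hull of the others. The closed sets `{p i}` and the closures of
`{p j | j ≠ i}` form a standard example of size `k + 1`, whose dimension is `k + 1`.
-/

open Finset.Colex

section PrecedesAll

variable {α : Type*} [BEq α]

def PrecedesAll (ω : List α) (S : Set α) (x : α) : Prop :=
  ∀ p ∈ S, ω.idxOf p < ω.idxOf x

theorem PrecedesAll.mono {ω : List α} {S T : Set α} {x : α} (h : PrecedesAll ω S x) (hTS : T ⊆ S) :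
    PrecedesAll ω T x :=
  fun p hp => h p (hTS hp)

theorem PrecedesAll.append_left [LawfulBEq α] {ω₁ ω₂ : List α} {S : Set α} {x : α} (hx : x ∈ ω₁)
    (hS : ∀ p ∈ S, p ∈ ω₁) (h : PrecedesAll ω₁ S x) : PrecedesAll (ω₁ ++ ω₂) S x := by
  intro p hp
  rw [List.idxOf_append_of_mem (hS p hp), List.idxOf_append_of_mem hx]
  exact h p hp

theorem PrecedesAll.append_right [LawfulBEq α] {ω₁ ω₂ : List α} {S : Set α} {x : α} (hx : x ∉ ω₁)
    (h : PrecedesAll ω₂ {p ∈ S | p ∉ ω₁} x) : PrecedesAll (ω₁ ++ ω₂) S x := by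
  intro p hp
  rw [List.idxOf_append_of_notMem hx]
  by_cases hp₁ : p ∈ ω₁
  · rw [List.idxOf_append_of_mem hp₁]
    exact (List.idxOf_lt_length_iff.2 hp₁).trans_le (Nat.le_add_right _ _)
  · rw [List.idxOf_append_of_notMem hp₁]
    exact Nat.add_lt_add_left (h p ⟨hp, hp₁⟩) _

end PrecedesAll

theorem PrecedesAll.singleton_inter {ω : List (ℝ × ℝ)} {H : Set (ℝ × ℝ)} {x : ℝ × ℝ} (hx : x ∉ H) :
    PrecedesAll ω (↑({x} : Finset (ℝ × ℝ)) ∩ H) x := by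
  rintro p ⟨hp, hpH⟩
  rw [Finset.coe_singleton, Set.mem_singleton_iff] at hp
  exact absurd (hp ▸ hpH) hx

theorem PrecedesAll.append_of_mem {ω₁ ω₂ : List (ℝ × ℝ)} {L M : Finset (ℝ × ℝ)} {H : Set (ℝ × ℝ)}
    {x : ℝ × ℝ} (e₁ : ω₁.toFinset = L) (hx : x ∈ L) (hM : ∀ p ∈ M, p ∉ H)
    (h : PrecedesAll ω₁ (↑L ∩ H) x) : PrecedesAll (ω₁ ++ ω₂) (↑(L ∪ M) ∩ H) x := by
  have hS : ↑(L ∪ M) ∩ H ⊆ ↑L ∩ H := by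
    rintro p ⟨hp, hpH⟩
    rw [Finset.coe_union] at hp
    exact ⟨hp.resolve_right fun hpM => hM p hpM hpH, hpH⟩
  refine (h.mono hS).append_left (by rwa [← List.mem_toFinset, e₁]) fun p hp => ?_
  rw [← List.mem_toFinset, e₁]
  exact (hS hp).1

theorem PrecedesAll.append_of_notMem {ω₁ ω₂ : List (ℝ × ℝ)} {L M : Finset (ℝ × ℝ)}
    {H : Set (ℝ × ℝ)} {x : ℝ × ℝ} (e₁ : ω₁.toFinset = L) (hx : x ∉ L)
    (h : PrecedesAll ω₂ (↑M ∩ H) x) : PrecedesAll (ω₁ ++ ω₂) (↑(L ∪ M) ∩ H) x := by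
  refine PrecedesAll.append_right (by rwa [← List.mem_toFinset, e₁]) (h.mono ?_)
  rintro p ⟨⟨hp, hpH⟩, hpL⟩
  rw [← List.mem_toFinset, e₁] at hpL
  rw [Finset.coe_union] at hp
  exact ⟨hp.resolve_left hpL, hpH⟩

theorem RHasRealizer.of_precedesAll {P : Finset (ℝ × ℝ)} {t : ℕ} (ω : Fin t → List (ℝ × ℝ))
    (hω : ∀ b, ∀ p ∈ P, p ∈ ω b)
    (hsep : ∀ A, RClosed P A → ∀ x ∈ P, x ∉ A → ∃ b, PrecedesAll (ω b) ↑A x) :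
    RHasRealizer P t := by
  let key (b : Fin t) (A : {A // RClosed P A}) := toColex (A.1.image (ω b).idxOf)
  have key_injective (b : Fin t) : Function.Injective (key b) := by
    intro A B hAB
    have himage : A.1.image (ω b).idxOf = B.1.image (ω b).idxOf := toColex_inj.1 hAB
    have hinj : Set.InjOn (ω b).idxOf P := fun p hp q _ hpq =>
      (List.idxOf_inj (hω b p hp)).1 hpq
    exact Subtype.ext <| Finset.image_injOn_powerset_of_injOn hinj
      (Finset.mem_powerset.2 A.2.1) (Finset.mem_powerset.2 B.2.1) himage
  refine ⟨fun b A B => key b A ≤ key b B, fun b => ?_, fun b A B hAB => ?_, fun A B hAB => ?_⟩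
  · exact { refl := fun A => le_rfl
            trans := fun A B C => le_trans
            antisymm := fun A B h₁ h₂ => key_injective b (le_antisymm h₁ h₂)
            total := fun A B => le_total _ _ }
  · exact toColex_le_toColex_of_subset (Finset.image_subset_image hAB)
  · by_contra hsub
    obtain ⟨x, hxA, hxB⟩ := Finset.not_subset.1 hsub
    obtain ⟨b, hb⟩ := hsep B.1 B.2 x (A.2.1 hxA) hxB
    refine (hAB b).not_gt (toColex_lt_toColex_iff_exists_forall_lt.2
      ⟨_, Finset.mem_image_of_mem _ hxA, ?_, ?_⟩)
    · intro hx
      obtain ⟨p, hp, hpx⟩ := Finset.mem_image.1 hx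
      exact (hb p hp).ne hpx
    · intro _ hq _
      obtain ⟨p, hp, rfl⟩ := Finset.mem_image.1 hq
      exact hb p hp

theorem RHasRealizer.card_le_of_standardExample {P : Finset (ℝ × ℝ)} {t n : ℕ}
    (h : RHasRealizer P t) (a b : Fin n → {A // RClosed P A})
    (hab : ∀ i j, i ≠ j → (a i).1 ⊆ (b j).1) (hba : ∀ i, ¬ (a i).1 ⊆ (b i).1) : n ≤ t := by
  obtain ⟨r, hlin, hext, hint⟩ := h
  have hwit : ∀ i, ∃ m, ¬ r m (a i) (b i) := fun i => by
    by_contra! hall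
    exact hba i (hint _ _ hall)
  choose m hm using hwit
  suffices Function.Injective m by simpa using Fintype.card_le_of_injective m this
  intro i j hij
  by_contra hne
  have hrev (l : Fin n) : r (m l) (b l) (a l) :=
    ((hlin (m l)).total (a l) (b l)).resolve_left (hm l)
  have htrans := (hlin (m i)).trans
  have hbij : b i = b j := (hlin (m i)).antisymm _ _
    (htrans _ _ _ (hrev i) (hext _ _ _ (hab i j hne)))
    (htrans _ _ _ (hij ▸ hrev j) (hext _ _ _ (hab j i (Ne.symm hne))))
  exact hba i (hbij ▸ hab i j hne)

def aboveLine (σ : ℝ) (x : ℝ × ℝ) : Set (ℝ × ℝ) := {p | σ * (p.1 - x.1) < p.2 - x.2}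

def belowLine (σ : ℝ) (x : ℝ × ℝ) : Set (ℝ × ℝ) := {p | p.2 - x.2 < σ * (p.1 - x.1)}

def leftOf (x : ℝ × ℝ) : Set (ℝ × ℝ) := {p | p.1 < x.1}

def rightOf (x : ℝ × ℝ) : Set (ℝ × ℝ) := {p | x.1 < p.1}

def openHalfPlane (α β : ℝ) (x : ℝ × ℝ) : Set (ℝ × ℝ) :=
  {p | α * (p.1 - x.1) + β * (p.2 - x.2) < 0}

theorem openHalfPlane_subset_or (α β : ℝ) (x : ℝ × ℝ) :
    (∃ σ, openHalfPlane α β x ⊆ aboveLine σ x) ∨ (∃ σ, openHalfPlane α β x ⊆ belowLine σ x) ∨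
      openHalfPlane α β x ⊆ leftOf x ∨ openHalfPlane α β x ⊆ rightOf x := by
  simp only [openHalfPlane, aboveLine, belowLine, leftOf, rightOf, Set.ofPred_subset_ofPred]
  rcases lt_trichotomy β 0 with hβ | rfl | hβ
  · refine Or.inl ⟨-α / β, fun p hp => ?_⟩
    rw [div_mul_eq_mul_div, div_lt_iff_of_neg hβ]
    linarith
  · rcases lt_trichotomy α 0 with hα | rfl | hα
    · exact Or.inr (Or.inr (Or.inr fun p hp => by nlinarith))
    · exact Or.inr (Or.inr (Or.inl fun p hp => by simp at hp))
    · exact Or.inr (Or.inr (Or.inl fun p hp => by nlinarith))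
  · refine Or.inr (Or.inl ⟨-α / β, fun p hp => ?_⟩)
    rw [div_mul_eq_mul_div, lt_div_iff₀ hβ]
    linarith

theorem exists_halfPlane_of_notMem_convexHull {B : Finset (ℝ × ℝ)} {x : ℝ × ℝ}
    (hx : x ∉ convexHull ℝ (B : Set (ℝ × ℝ))) :
    (∃ σ, ↑B ⊆ aboveLine σ x) ∨ (∃ σ, ↑B ⊆ belowLine σ x) ∨ ↑B ⊆ leftOf x ∨
      ↑B ⊆ rightOf x := by
  obtain ⟨f, u, hfB, hfx⟩ := geometric_hahn_banach_closed_point (convex_convexHull ℝ _)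
    (B.finite_toSet.isClosed_convexHull ℝ) hx
  have hf (p : ℝ × ℝ) : f p = p.1 * f (1, 0) + p.2 * f (0, 1) := by
    conv_lhs => rw [show p = p.1 • ((1 : ℝ), (0 : ℝ)) + p.2 • ((0 : ℝ), (1 : ℝ)) by ext <;> simp]
    rw [map_add, map_smul, map_smul, smul_eq_mul, smul_eq_mul]
  have hB : ↑B ⊆ openHalfPlane (f (1, 0)) (f (0, 1)) x := by
    intro p hp
    have := (hfB p (subset_convexHull ℝ _ hp)).trans hfx
    rw [hf p, hf x] at this
    rw [openHalfPlane, Set.mem_ofPred_eq]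
    linarith
  rcases openHalfPlane_subset_or (f (1, 0)) (f (0, 1)) x with ⟨σ, h⟩ | ⟨σ, h⟩ | h | h
  · exact Or.inl ⟨σ, hB.trans h⟩
  · exact Or.inr (Or.inl ⟨σ, hB.trans h⟩)
  · exact Or.inr (Or.inr (Or.inl (hB.trans h)))
  · exact Or.inr (Or.inr (Or.inr (hB.trans h)))

namespace CompOf

variable {P L M : Finset (ℝ × ℝ)}

theorem notMem_right (hc : CompOf P L M) {x : ℝ × ℝ} (hx : x ∈ L) : x ∉ M :=
  fun hxM => lt_irrefl _ (hc.2.2.2.1 x hx x hxM)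

theorem notMem_left (hc : CompOf P L M) {x : ℝ × ℝ} (hx : x ∈ M) : x ∉ L :=
  fun hxL => hc.notMem_right hxL hx

theorem notMem_leftOf (hc : CompOf P L M) {x p : ℝ × ℝ} (hx : x ∈ L) (hp : p ∈ M) :
    p ∉ leftOf x :=
  (hc.2.2.2.1 x hx p hp).not_gt

theorem notMem_rightOf (hc : CompOf P L M) {x p : ℝ × ℝ} (hx : x ∈ M) (hp : p ∈ L) :
    p ∉ rightOf x :=
  (hc.2.2.2.1 p hp x hx).not_gt

-- A point `p ∈ L` left of `x` and below the line would make the slope from `p` to `x` exceed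
-- the slope from `x` to `p₀`.
theorem inter_belowLine_subset (hc : CompOf P L M) {σ : ℝ} {x p₀ : ℝ × ℝ} (hx : x ∈ L)
    (hp₀ : p₀ ∈ M) (hb₀ : p₀ ∈ belowLine σ x) :
    ↑L ∩ belowLine σ x ⊆ ↑L ∩ rightOf x := by
  rintro p ⟨hp, hb⟩
  refine ⟨hp, show x.1 < p.1 from lt_of_not_ge fun hpx => ?_⟩
  rcases hpx.lt_or_eq with hpx | hpx
  · have hslope := (hc.2.2.2.2 x hx p₀ hp₀).1 p hp x hx hpx
    have hxp₀ : x.1 < p₀.1 := hc.2.2.2.1 x hx p₀ hp₀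
    simp only [belowLine, Set.mem_ofPred_eq] at hb hb₀
    nlinarith [mul_pos (sub_pos.2 hxp₀) (sub_pos.2 hpx)]
  · obtain rfl : p = x := by_contra fun hne => hc.2.1 p hp x hx hne hpx
    simp [belowLine] at hb

theorem inter_aboveLine_subset (hc : CompOf P L M) {σ : ℝ} {x p₀ : ℝ × ℝ} (hx : x ∈ M)
    (hp₀ : p₀ ∈ L) (ha₀ : p₀ ∈ aboveLine σ x) :
    ↑M ∩ aboveLine σ x ⊆ ↑M ∩ leftOf x := by
  rintro p ⟨hp, ha⟩
  refine ⟨hp, show p.1 < x.1 from lt_of_not_ge fun hxp => ?_⟩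
  rcases hxp.lt_or_eq with hxp | hxp
  · have hslope := (hc.2.2.2.2 p₀ hp₀ x hx).2 x hx p hp hxp
    have hp₀x : p₀.1 < x.1 := hc.2.2.2.1 p₀ hp₀ x hx
    simp only [aboveLine, Set.mem_ofPred_eq] at ha ha₀
    nlinarith [mul_pos (sub_pos.2 hp₀x) (sub_pos.2 hxp)]
  · obtain rfl : p = x := by_contra fun hne => hc.2.2.1 p hp x hx hne hxp.symm
    simp [aboveLine] at ha

end CompOf

structure ESOrders (S : Finset (ℝ × ℝ)) (i j : ℕ) (A B : ℕ → List (ℝ × ℝ)) : Prop where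
  toFinset_A : ∀ t, (A t).toFinset = S
  toFinset_B : ∀ t, (B t).toFinset = S
  zero : A 0 = B 0
  last : A i = B j
  right : ∀ x ∈ S, PrecedesAll (A 0) (↑S ∩ rightOf x) x
  left : ∀ x ∈ S, PrecedesAll (A i) (↑S ∩ leftOf x) x
  above : ∀ x ∈ S, ∀ σ, ∃ t ≤ i, PrecedesAll (A t) (↑S ∩ aboveLine σ x) x
  below : ∀ x ∈ S, ∀ σ, ∃ t ≤ j, PrecedesAll (B t) (↑S ∩ belowLine σ x) x

namespace ESOrders

theorem singleton (p : ℝ × ℝ) (i j : ℕ) : ESOrders {p} i j (fun _ => [p]) (fun _ => [p]) where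
  toFinset_A _ := by simp
  toFinset_B _ := by simp
  zero := rfl
  last := rfl
  right x hx := by
    rw [Finset.mem_singleton.1 hx]; exact PrecedesAll.singleton_inter (by simp [rightOf])
  left x hx := by
    rw [Finset.mem_singleton.1 hx]; exact PrecedesAll.singleton_inter (by simp [leftOf])
  above x hx σ := ⟨0, Nat.zero_le _, by
    rw [Finset.mem_singleton.1 hx]; exact PrecedesAll.singleton_inter (by simp [aboveLine])⟩
  below x hx σ := ⟨0, Nat.zero_le _, by
    rw [Finset.mem_singleton.1 hx]; exact PrecedesAll.singleton_inter (by simp [belowLine])⟩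

def compA (AL AM : ℕ → List (ℝ × ℝ)) (i t : ℕ) : List (ℝ × ℝ) :=
  if t ≤ i then AM t ++ AL t else AL i ++ AM (i + 1)

def compB (BL BM : ℕ → List (ℝ × ℝ)) : ℕ → List (ℝ × ℝ)
  | 0 => BM 0 ++ BL 0
  | t + 1 => BL (t + 1) ++ BM t

variable {P L M : Finset (ℝ × ℝ)} {i j : ℕ} {AL BL AM BM : ℕ → List (ℝ × ℝ)}

theorem compA_of_le {t : ℕ} (ht : t ≤ i) : compA AL AM i t = AM t ++ AL t := if_pos ht

theorem compA_succ : compA AL AM i (i + 1) = AL i ++ AM (i + 1) := if_neg (by omega)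

theorem comp_above (hL : ESOrders L i (j + 1) AL BL) (hM : ESOrders M (i + 1) j AM BM)
    (hc : CompOf P L M) {x : ℝ × ℝ} (hx : x ∈ P) (σ : ℝ) :
    ∃ t ≤ i + 1, PrecedesAll (compA AL AM i t) (↑P ∩ aboveLine σ x) x := by
  obtain rfl := hc.1
  rcases Finset.mem_union.1 hx with hxL | hxM
  · obtain ⟨t, ht, h⟩ := hL.above x hxL σ
    refine ⟨t, by omega, ?_⟩
    rw [compA_of_le ht, Finset.union_comm]
    exact h.append_of_notMem (hM.toFinset_A t) (hc.notMem_right hxL)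
  by_cases hex : ∃ p₀ ∈ L, p₀ ∈ aboveLine σ x
  · obtain ⟨p₀, hp₀, ha₀⟩ := hex
    refine ⟨i + 1, le_rfl, ?_⟩
    rw [compA_succ]
    exact ((hM.left x hxM).mono (hc.inter_aboveLine_subset hxM hp₀ ha₀)).append_of_notMem
      (hL.toFinset_A i) (hc.notMem_left hxM)
  push Not at hex
  obtain ⟨t, ht, h⟩ := hM.above x hxM σ
  refine ⟨t, ht, ?_⟩
  rcases ht.lt_or_eq with ht | rfl
  · rw [compA_of_le (by omega), Finset.union_comm]
    exact h.append_of_mem (hM.toFinset_A t) hxM hex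
  · rw [compA_succ]
    exact h.append_of_notMem (hL.toFinset_A i) (hc.notMem_left hxM)

theorem comp_below (hL : ESOrders L i (j + 1) AL BL) (hM : ESOrders M (i + 1) j AM BM)
    (hc : CompOf P L M) {x : ℝ × ℝ} (hx : x ∈ P) (σ : ℝ) :
    ∃ t ≤ j + 1, PrecedesAll (compB BL BM t) (↑P ∩ belowLine σ x) x := by
  obtain rfl := hc.1
  rcases Finset.mem_union.1 hx with hxL | hxM
  swap
  · obtain ⟨t, ht, h⟩ := hM.below x hxM σ
    exact ⟨t + 1, by omega, h.append_of_notMem (hL.toFinset_B _) (hc.notMem_left hxM)⟩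
  by_cases hex : ∃ p₀ ∈ M, p₀ ∈ belowLine σ x
  · obtain ⟨p₀, hp₀, hb₀⟩ := hex
    refine ⟨0, Nat.zero_le _, ?_⟩
    have h := (hL.right x hxL).mono (hc.inter_belowLine_subset hxL hp₀ hb₀)
    rw [hL.zero] at h
    rw [compB, Finset.union_comm]
    exact h.append_of_notMem (hM.toFinset_B 0) (hc.notMem_right hxL)
  push Not at hex
  obtain ⟨t, ht, h⟩ := hL.below x hxL σ
  refine ⟨t, ht, ?_⟩
  cases t with
  | zero =>
    rw [compB, Finset.union_comm]
    exact h.append_of_notMem (hM.toFinset_B 0) (hc.notMem_right hxL)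
  | succ t => exact h.append_of_mem (hL.toFinset_B _) hxL hex

theorem comp (hL : ESOrders L i (j + 1) AL BL) (hM : ESOrders M (i + 1) j AM BM)
    (hc : CompOf P L M) : ESOrders P (i + 1) (j + 1) (compA AL AM i) (compB BL BM) where
  toFinset_A t := by
    rw [hc.1, compA]
    split_ifs <;>
      simp only [List.toFinset_append, hL.toFinset_A, hM.toFinset_A, Finset.union_comm]
  toFinset_B t := by
    rw [hc.1]
    cases t <;>
      simp only [compB, List.toFinset_append, hL.toFinset_B, hM.toFinset_B, Finset.union_comm]
  zero := by rw [compA_of_le (Nat.zero_le _), compB, hL.zero, hM.zero]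
  last := by rw [compA_succ, compB, hL.last, hM.last]
  right x hx := by
    obtain rfl := hc.1
    rw [compA_of_le (Nat.zero_le _), Finset.union_comm]
    rcases Finset.mem_union.1 hx with hxL | hxM
    · exact (hL.right x hxL).append_of_notMem (hM.toFinset_A 0) (hc.notMem_right hxL)
    · exact (hM.right x hxM).append_of_mem (hM.toFinset_A 0) hxM
        fun p hp => hc.notMem_rightOf hxM hp
  left x hx := by
    obtain rfl := hc.1
    rw [compA_succ]
    rcases Finset.mem_union.1 hx with hxL | hxM
    · exact (hL.left x hxL).append_of_mem (hL.toFinset_A i) hxL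
        fun p hp => hc.notMem_leftOf hxL hp
    · exact (hM.left x hxM).append_of_notMem (hL.toFinset_A i) (hc.notMem_left hxM)
  above x hx σ := hL.comp_above hM hc hx σ
  below x hx σ := hL.comp_below hM hc hx σ

end ESOrders

theorem IsES.exists_esOrders {i j : ℕ} {S : Finset (ℝ × ℝ)} (h : IsES i j S) :
    ∃ A B, ESOrders S i j A B := by
  induction h with
  | base_left k p => exact ⟨_, _, ESOrders.singleton p 0 k⟩
  | base_right k p => exact ⟨_, _, ESOrders.singleton p k 0⟩
  | step _ _ hc ihL ihM =>
    obtain ⟨AL, BL, hL⟩ := ihL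
    obtain ⟨AM, BM, hM⟩ := ihM
    exact ⟨_, _, hL.comp hM hc⟩

structure ChainOrders (S : Finset (ℝ × ℝ)) (c k : ℕ) (R : ℕ → List (ℝ × ℝ)) : Prop where
  toFinset : ∀ b, (R b).toFinset = S
  right : ∀ x ∈ S, PrecedesAll (R 0) (↑S ∩ rightOf x) x
  left : ∀ x ∈ S, ∃ b ≤ c, PrecedesAll (R b) (↑S ∩ leftOf x) x
  above : ∀ x ∈ S, ∀ σ, ∃ b ≤ c, PrecedesAll (R b) (↑S ∩ aboveLine σ x) x
  below : ∀ x ∈ S, ∀ σ, ∃ b ≤ k, PrecedesAll (R b) (↑S ∩ belowLine σ x) x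

theorem ESOrders.chainOrders {S : Finset (ℝ × ℝ)} {k : ℕ} {A B : ℕ → List (ℝ × ℝ)}
    (h : ESOrders S 0 k A B) : ChainOrders S 0 k B where
  toFinset := h.toFinset_B
  right x hx := h.zero ▸ h.right x hx
  left x hx := ⟨0, le_rfl, h.zero ▸ h.left x hx⟩
  above x hx σ := by
    obtain ⟨t, ht, hA⟩ := h.above x hx σ
    obtain rfl := Nat.le_zero.1 ht
    exact ⟨0, le_rfl, h.zero ▸ hA⟩
  below := h.below

namespace ChainOrders

-- Since `A (c + 1) = B (k - (c + 1))`, the orders with `b > c` run through `B` backwards.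
def step (R A B : ℕ → List (ℝ × ℝ)) (c k b : ℕ) : List (ℝ × ℝ) :=
  if b ≤ c then A b ++ R b else R b ++ B (k - b)

variable {P L M : Finset (ℝ × ℝ)} {c k : ℕ} {R A B : ℕ → List (ℝ × ℝ)}

theorem step_of_le {b : ℕ} (hb : b ≤ c) : step R A B c k b = A b ++ R b := if_pos hb

theorem step_of_lt {b : ℕ} (hb : c < b) : step R A B c k b = R b ++ B (k - b) :=
  if_neg (by omega)

theorem step_succ (hM : ESOrders M (c + 1) (k - (c + 1)) A B) :
    step R A B c k (c + 1) = R (c + 1) ++ A (c + 1) := by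
  rw [step_of_lt (Nat.lt_succ_self c), hM.last]

theorem step_above (hR : ChainOrders L c k R) (hM : ESOrders M (c + 1) (k - (c + 1)) A B)
    (hc : CompOf P L M) {x : ℝ × ℝ} (hx : x ∈ P) (σ : ℝ) :
    ∃ b ≤ c + 1, PrecedesAll (step R A B c k b) (↑P ∩ aboveLine σ x) x := by
  obtain rfl := hc.1
  rcases Finset.mem_union.1 hx with hxL | hxM
  · obtain ⟨b, hb, h⟩ := hR.above x hxL σ
    refine ⟨b, by omega, ?_⟩
    rw [step_of_le hb, Finset.union_comm]
    exact h.append_of_notMem (hM.toFinset_A b) (hc.notMem_right hxL)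
  by_cases hex : ∃ p₀ ∈ L, p₀ ∈ aboveLine σ x
  · obtain ⟨p₀, hp₀, ha₀⟩ := hex
    refine ⟨c + 1, le_rfl, ?_⟩
    rw [step_succ hM]
    exact ((hM.left x hxM).mono (hc.inter_aboveLine_subset hxM hp₀ ha₀)).append_of_notMem
      (hR.toFinset _) (hc.notMem_left hxM)
  push Not at hex
  obtain ⟨t, ht, h⟩ := hM.above x hxM σ
  refine ⟨t, ht, ?_⟩
  rcases ht.lt_or_eq with ht | rfl
  · rw [step_of_le (by omega), Finset.union_comm]
    exact h.append_of_mem (hM.toFinset_A t) hxM hex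
  · rw [step_succ hM]
    exact h.append_of_notMem (hR.toFinset _) (hc.notMem_left hxM)

theorem step_below (hR : ChainOrders L c k R) (hM : ESOrders M (c + 1) (k - (c + 1)) A B)
    (hc : CompOf P L M) (hck : c + 1 ≤ k) {x : ℝ × ℝ} (hx : x ∈ P) (σ : ℝ) :
    ∃ b ≤ k, PrecedesAll (step R A B c k b) (↑P ∩ belowLine σ x) x := by
  obtain rfl := hc.1
  rcases Finset.mem_union.1 hx with hxL | hxM
  swap
  · obtain ⟨t, ht, h⟩ := hM.below x hxM σ
    refine ⟨k - t, by omega, ?_⟩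
    rw [step_of_lt (by omega), Nat.sub_sub_self (by omega)]
    exact h.append_of_notMem (hR.toFinset _) (hc.notMem_left hxM)
  by_cases hex : ∃ p₀ ∈ M, p₀ ∈ belowLine σ x
  · obtain ⟨p₀, hp₀, hb₀⟩ := hex
    refine ⟨0, Nat.zero_le _, ?_⟩
    rw [step_of_le (Nat.zero_le _), Finset.union_comm]
    exact ((hR.right x hxL).mono (hc.inter_belowLine_subset hxL hp₀ hb₀)).append_of_notMem
      (hM.toFinset_A 0) (hc.notMem_right hxL)
  push Not at hex
  obtain ⟨b, hb, h⟩ := hR.below x hxL σ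
  refine ⟨b, hb, ?_⟩
  rcases le_or_gt b c with hbc | hbc
  · rw [step_of_le hbc, Finset.union_comm]
    exact h.append_of_notMem (hM.toFinset_A b) (hc.notMem_right hxL)
  · rw [step_of_lt hbc]
    exact h.append_of_mem (hR.toFinset b) hxL hex

theorem step_chainOrders (hR : ChainOrders L c k R)
    (hM : ESOrders M (c + 1) (k - (c + 1)) A B) (hc : CompOf P L M) (hck : c + 1 ≤ k) :
    ChainOrders P (c + 1) k (step R A B c k) where
  toFinset b := by
    rw [hc.1, step]
    split_ifs <;> simp only [List.toFinset_append, hR.toFinset, hM.toFinset_A,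
      hM.toFinset_B, Finset.union_comm]
  right x hx := by
    obtain rfl := hc.1
    rw [step_of_le (Nat.zero_le _), Finset.union_comm]
    rcases Finset.mem_union.1 hx with hxL | hxM
    · exact (hR.right x hxL).append_of_notMem (hM.toFinset_A 0) (hc.notMem_right hxL)
    · exact (hM.right x hxM).append_of_mem (hM.toFinset_A 0) hxM
        fun p hp => hc.notMem_rightOf hxM hp
  left x hx := by
    obtain rfl := hc.1
    rcases Finset.mem_union.1 hx with hxL | hxM
    · obtain ⟨b, hb, h⟩ := hR.left x hxL
      refine ⟨b, by omega, ?_⟩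
      rw [step_of_le hb, Finset.union_comm]
      exact h.append_of_notMem (hM.toFinset_A b) (hc.notMem_right hxL)
    · refine ⟨c + 1, le_rfl, ?_⟩
      rw [step_succ hM]
      exact (hM.left x hxM).append_of_notMem (hR.toFinset _) (hc.notMem_left hxM)
  above x hx σ := hR.step_above hM hc hx σ
  below x hx σ := hR.step_below hM hc hck hx σ

end ChainOrders

theorem IsXES.exists_chainOrders {k : ℕ} {P : Finset (ℝ × ℝ)} (h : IsXES k P) :
    ∃ R, ChainOrders P k k R := by
  obtain ⟨E, Q, hE, hQ0, hcomp, rfl⟩ := h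
  suffices ∀ c ≤ k, ∃ R, ChainOrders (Q c) c k R from this k le_rfl
  intro c hc
  induction c with
  | zero =>
    obtain ⟨A, B, h⟩ := (hE 0 (Nat.zero_le _)).exists_esOrders
    exact ⟨B, hQ0 ▸ h.chainOrders⟩
  | succ c ih =>
    obtain ⟨R, hR⟩ := ih (by omega)
    obtain ⟨A, B, hM⟩ := (hE (c + 1) hc).exists_esOrders
    exact ⟨_, hR.step_chainOrders hM (hcomp c hc) hc⟩

theorem ChainOrders.hasRealizer {P : Finset (ℝ × ℝ)} {k : ℕ} {R : ℕ → List (ℝ × ℝ)}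
    (h : ChainOrders P k k R) : RHasRealizer P (k + 1) := by
  refine RHasRealizer.of_precedesAll (fun b => R b)
    (fun b p hp => by rwa [← List.mem_toFinset, h.toFinset]) fun A hA x hx hxA => ?_
  have hxA' : x ∉ convexHull ℝ (A : Set (ℝ × ℝ)) := fun hconv => hxA (hA.2 x hx hconv)
  have hAP : (A : Set (ℝ × ℝ)) ⊆ P := hA.1
  rcases exists_halfPlane_of_notMem_convexHull hxA' with ⟨σ, hσ⟩ | ⟨σ, hσ⟩ | hσ | hσ
  · obtain ⟨b, hb, hbefore⟩ := h.above x hx σ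
    exact ⟨⟨b, by omega⟩, hbefore.mono (Set.subset_inter hAP hσ)⟩
  · obtain ⟨b, hb, hbefore⟩ := h.below x hx σ
    exact ⟨⟨b, by omega⟩, hbefore.mono (Set.subset_inter hAP hσ)⟩
  · obtain ⟨b, hb, hbefore⟩ := h.left x hx
    exact ⟨⟨b, by omega⟩, hbefore.mono (Set.subset_inter hAP hσ)⟩
  · exact ⟨0, (h.right x hx).mono (Set.subset_inter hAP hσ)⟩

def IsCup (p : ℕ → ℝ × ℝ) (k : ℕ) : Prop :=
  (∀ a b, a < b → b ≤ k → (p a).1 < (p b).1) ∧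
  ∀ a b c, a < b → b < c → c ≤ k →
    ((p b).2 - (p a).2) * ((p c).1 - (p b).1) < ((p c).2 - (p b).2) * ((p b).1 - (p a).1)

theorem notMem_convexHull_of_lt {E : Type*} [AddCommGroup E] [Module ℝ E] {s : Set E} {x : E}
    (f : E →ₗ[ℝ] ℝ) (hs : ∀ q ∈ s, f x < f q) : x ∉ convexHull ℝ s :=
  fun hx => lt_irrefl (f x) (convexHull_min hs (convex_halfSpace_gt f.isLinear (f x)) hx)

theorem IsCup.notMem_convexHull {p : ℕ → ℝ × ℝ} {k j : ℕ} (h : IsCup p k) (hj : j ≤ k) :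
    p j ∉ convexHull ℝ (p '' {i | i ≤ k ∧ i ≠ j}) := by
  obtain ⟨hx, hslope⟩ := h
  rcases Nat.eq_zero_or_pos j with rfl | hj0
  · refine notMem_convexHull_of_lt (LinearMap.fst ℝ ℝ ℝ) ?_
    rintro _ ⟨i, ⟨hik, hi0⟩, rfl⟩
    exact hx 0 i (Nat.pos_of_ne_zero hi0) hik
  rcases hj.lt_or_eq with hjk | rfl
  swap
  · refine notMem_convexHull_of_lt (-LinearMap.fst ℝ ℝ ℝ) ?_
    rintro _ ⟨i, ⟨hik, hij⟩, rfl⟩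
    simpa using hx i j (lt_of_le_of_ne hik hij) le_rfl
  -- the line through `p j` parallel to the chord from `p (j - 1)` to `p (j + 1)` has every
  -- other point of the cup strictly above it
  let f : (ℝ × ℝ) →ₗ[ℝ] ℝ :=
    ((p (j + 1)).1 - (p (j - 1)).1) • LinearMap.snd ℝ ℝ ℝ -
      ((p (j + 1)).2 - (p (j - 1)).2) • LinearMap.fst ℝ ℝ ℝ
  have hf (q : ℝ × ℝ) :
      f q = ((p (j + 1)).1 - (p (j - 1)).1) * q.2 - ((p (j + 1)).2 - (p (j - 1)).2) * q.1 := by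
    simp [f]
  have hj_below : f (p j) < f (p (j - 1)) := by
    rw [hf, hf]
    nlinarith [hslope (j - 1) j (j + 1) (by omega) (by omega) (by omega)]
  refine notMem_convexHull_of_lt f ?_
  rintro _ ⟨i, ⟨hik, hij⟩, rfl⟩
  refine hj_below.trans_le ?_
  rw [hf, hf]
  rcases lt_trichotomy i (j - 1) with hi | rfl | hi
  · nlinarith [hslope i (j - 1) (j + 1) hi (by omega) (by omega)]
  · exact le_rfl
  obtain rfl | hi := (show j + 1 ≤ i by omega).eq_or_lt
  · nlinarith
  · nlinarith [hslope (j - 1) (j + 1) i (by omega) hi hik]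

theorem rClosed_singleton {P : Finset (ℝ × ℝ)} {q : ℝ × ℝ} (hq : q ∈ P) : RClosed P {q} :=
  ⟨Finset.singleton_subset_iff.2 hq, fun x _ hx => by simpa using hx⟩

open Classical in
theorem rClosed_filter_mem_convexHull (P : Finset (ℝ × ℝ)) (s : Set (ℝ × ℝ)) :
    RClosed P (P.filter (· ∈ convexHull ℝ s)) := by
  refine ⟨Finset.filter_subset _ _, fun x hx hconv => Finset.mem_filter.2 ⟨hx, ?_⟩⟩
  refine convexHull_min (fun q hq => ?_) (convex_convexHull ℝ s) hconv
  exact (Finset.mem_filter.1 (Finset.mem_coe.1 hq)).2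

open Classical in
theorem IsCup.succ_le_of_hasRealizer {P : Finset (ℝ × ℝ)} {p : ℕ → ℝ × ℝ} {k t : ℕ}
    (hcup : IsCup p k) (hpP : ∀ i ≤ k, p i ∈ P) (ht : RHasRealizer P t) : k + 1 ≤ t := by
  refine ht.card_le_of_standardExample (n := k + 1)
    (fun i => ⟨{p i}, rClosed_singleton (hpP i (by omega))⟩)
    (fun i => ⟨_, rClosed_filter_mem_convexHull P (p '' {j | j ≤ k ∧ j ≠ i})⟩) (fun i j hij => ?_) fun i => ?_
  · refine Finset.singleton_subset_iff.2 (Finset.mem_filter.2 ⟨hpP i (by omega), ?_⟩)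
    exact subset_convexHull ℝ _ ⟨i, ⟨by omega, Fin.val_ne_of_ne hij⟩, rfl⟩
  · intro hsub
    exact hcup.notMem_convexHull (by omega)
      (Finset.mem_filter.1 (Finset.singleton_subset_iff.1 hsub)).2

theorem IsES.nonempty {i j : ℕ} {S : Finset (ℝ × ℝ)} (h : IsES i j S) : S.Nonempty := by
  induction h with
  | base_left k p => exact Finset.singleton_nonempty p
  | base_right k p => exact Finset.singleton_nonempty p
  | step _ _ hc ihL _ => exact hc.1 ▸ ihL.mono Finset.subset_union_left

theorem IsXES.exists_cup {k : ℕ} {P : Finset (ℝ × ℝ)} (h : IsXES k P) :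
    ∃ p : ℕ → ℝ × ℝ, (∀ i ≤ k, p i ∈ P) ∧ IsCup p k := by
  obtain ⟨E, Q, hE, hQ0, hcomp, rfl⟩ := h
  have hQ_mono {a b : ℕ} (hab : a ≤ b) (hb : b ≤ k) : Q a ⊆ Q b := by
    induction b, hab using Nat.le_induction with
    | base => exact subset_rfl
    | succ b _ ih => exact (ih (by omega)).trans ((hcomp b hb).1 ▸ Finset.subset_union_left)
  have hEQ {a : ℕ} (ha : a ≤ k) : E a ⊆ Q a := by
    cases a with
    | zero => exact hQ0 ▸ subset_rfl
    | succ a => exact (hcomp a ha).1 ▸ Finset.subset_union_right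
  choose p hp using fun a => if ha : a ≤ k then (hE a ha).nonempty.imp fun _ h _ => h
    else ⟨(0, 0), fun h => absurd h ha⟩
  have hpQ {a b : ℕ} (hab : a ≤ b) (hb : b ≤ k) : p a ∈ Q b :=
    hQ_mono hab hb (hEQ (hab.trans hb) (hp a (hab.trans hb)))
  have hx {a b : ℕ} (hab : a < b) (hb : b ≤ k) : (p a).1 < (p b).1 := by
    obtain ⟨b, rfl⟩ := Nat.exists_eq_add_of_lt hab
    exact (hcomp _ hb).2.2.2.1 _ (hpQ (by omega) (by omega)) _ (hp _ hb)
  refine ⟨p, fun i hi => hpQ hi le_rfl, fun a b hab hb => hx hab hb, fun a b c hab hbc hc => ?_⟩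
  obtain ⟨c, rfl⟩ := Nat.exists_eq_add_of_lt hbc
  exact ((hcomp _ hc).2.2.2.2 _ (hpQ (by omega) (by omega)) _ (hp _ hc)).1 _
    (hpQ (by omega) (by omega)) _ (hpQ (by omega) (by omega)) (hx hab (by omega))

theorem xes_orderDim_general (k : ℕ) (P : Finset (ℝ × ℝ)) (hxes : IsXES k P) :
    IsLeast {t : ℕ | 0 < t ∧ RHasRealizer P t} (k + 1) := by
  obtain ⟨R, hR⟩ := hxes.exists_chainOrders
  obtain ⟨p, hpP, hcup⟩ := hxes.exists_cup
  exact ⟨⟨k.succ_pos, hR.hasRealizer⟩, fun t ht => hcup.succ_le_of_hasRealizer hpP ht.2⟩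

/-- For every positive integer `k` and every realization of the extended
Erdős–Szekeres point set `XES(k)`, the order dimension of the lattice of closed sets of the
realizable convex geometry on `XES(k)` equals `k + 1`: `k + 1` is the least positive
integer `t` such that the lattice admits a realizer of size `t`. -/
theorem xes_orderDim (k : ℕ) (hk : 0 < k) (P : Finset (ℝ × ℝ))
    (hgen : GenPos P) (hxes : IsXES k P) :
    IsLeast {t : ℕ | 0 < t ∧ RHasRealizer P t} (k + 1) :=
  xes_orderDim_general k P hxes
end
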